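/- Let S be a state (a store-heap pair) and t a spanning tree of S such that every edge of S is local with respect to t. Then for every spanning tree t' of S, the composition t'⁻¹ ∘ t witnesses that t' is a rotation of t (i.e., t ∼_{t'⁻¹ ∘ t} t'), and moreover every edge of S is also local with respect to t'. -/

import Mathlib

open scoped Classical

/-- Positions in a tree: finite sequences of natural numbers. -/
abbrev Pos := List ℕ

/-- A tree over an alphabet `A`: a finite partial function from positions to `A`
whose domain is prefix-closed and closed under taking smaller sibling indices. -/
structure PTree (A : Type) where
  f : Pos → Option A
  fin : {p : Pos | f p ≠ none}.Finite
  prefixClosed : ∀ (p : Pos) (i : ℕ), f (p ++ [i]) ≠ none → f p ≠ none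
  childClosed : ∀ (p : Pos) (i j : ℕ), j < i → f (p ++ [i]) ≠ none → f (p ++ [j]) ≠ none

namespace PTree

/-- Domain of a tree. -/
def dom {A : Type} (t : PTree A) : Set Pos := {p | t.f p ≠ none}

/-- The maximal direction `N` such that some position `p.N` is in the domain. -/
noncomputable def maxDir {A : Type} (t : PTree A) : ℕ :=
  sSup {i | ∃ p, p ++ [i] ∈ t.dom}

/-- The direction alphabet `D(t) = {-1, 0, …, N}`. -/
noncomputable def dirs {A : Type} (t : PTree A) : Set ℤ :=
  {e | e = -1 ∨ (0 ≤ e ∧ e ≤ (t.maxDir : ℤ))}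

/-- Moving from position `p` in direction `e`: `-1` is the parent direction
(`(p.i).(-1) = p`), a non-negative direction `e` leads to the child `p.e`. -/
def step (p : Pos) (e : ℤ) : Pos :=
  if e = -1 then p.dropLast else p ++ [e.toNat]

/-- `t ∼_r u`: `u` is a rotation of `t` via the bijection `r`. -/
noncomputable def IsRotation {A B : Type} (t : PTree A) (u : PTree B) (r : Pos → Pos) : Prop :=
  Set.BijOn r t.dom u.dom ∧
  ∀ p ∈ t.dom, ∀ d : ℕ, (p ++ [d]) ∈ t.dom →
    ∃ e ∈ u.dirs, r (p ++ [d]) = step (r p) e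

/-- A simple path in a tree: pairwise distinct positions, each obtained from the
previous one by moving in a direction from `D(t) ∪ {-1}`. -/
noncomputable def IsPath {A : Type} (t : PTree A) (ps : List Pos) : Prop :=
  ps.Nodup ∧ (∀ q ∈ ps, q ∈ t.dom) ∧
  ps.Chain' (fun a b => ∃ e ∈ t.dirs, b = step a e)

end PTree

/-- A heap: a finite partial function from locations to lists of successor
locations (the `k`-th entry is the target of selector `k`). -/
structure Heap (Loc : Type) where
  f : Loc → Option (List Loc)
  fin : {ℓ | f ℓ ≠ none}.Finite

namespace Heap

def dom {Loc : Type} (h : Heap Loc) : Set Loc := {ℓ | h.f ℓ ≠ none}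

/-- Disjointness of two heaps. -/
def Disj {Loc : Type} (h₁ h₂ : Heap Loc) : Prop :=
  ∀ ℓ, h₁.f ℓ = none ∨ h₂.f ℓ = none

/-- Union of two heaps. -/
def union {Loc : Type} (h₁ h₂ : Heap Loc) : Heap Loc where
  f := fun ℓ => (h₁.f ℓ).or (h₂.f ℓ)
  fin := by
    apply Set.Finite.subset (h₁.fin.union h₂.fin)
    intro ℓ hℓ
    simp only [Set.mem_setOf_eq, Set.mem_union] at hℓ ⊢
    by_contra hc
    push_neg at hc
    exact hℓ (by simp [hc.1, hc.2])

end Heap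

/-- `HEdge h ℓ k ℓ'`: the heap has an edge `ℓ →ᵏ ℓ'`. -/
def HEdge {Loc : Type} (h : Heap Loc) (ℓ : Loc) (k : ℕ) (ℓ' : Loc) : Prop :=
  ∃ ℓs : List Loc, h.f ℓ = some ℓs ∧ ℓs[k]? = some ℓ'

/-- Image of the heap: all locations which are targets of some edge. -/
def HImg {Loc : Type} (h : Heap Loc) : Set Loc := {ℓ' | ∃ ℓ k, HEdge h ℓ k ℓ'}

/-- Reachability by a chain of heap edges. -/
def Reach {Loc : Type} (h : Heap Loc) : Loc → Loc → Prop :=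
  Relation.ReflTransGen (fun a b => ∃ k, HEdge h a k b)

/-- `ℓf` (on the shape of the tree `t`) is a spanning tree of the heap `h`:
a bijection from the tree domain onto the allocated locations such that every
tree edge is underlain by a heap edge. -/
def IsSpanning {Loc A : Type} (h : Heap Loc) (t : PTree A) (ℓf : Pos → Loc) : Prop :=
  Set.BijOn ℓf t.dom h.dom ∧
  ∀ p ∈ t.dom, ∀ d : ℕ, p ++ [d] ∈ t.dom →
    ∃ k, HEdge h (ℓf p) k (ℓf (p ++ [d]))

/-- An edge `ℓ → ℓ'` is local w.r.t. a spanning tree: its endpoints are at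
distance at most one in the tree (`d ∈ D(t) ∪ {ε}`). -/
noncomputable def LocalEdgeWrt {Loc A : Type} (t : PTree A) (ℓf : Pos → Loc) (ℓ ℓ' : Loc) : Prop :=
  ∃ p ∈ t.dom, ℓf p = ℓ ∧
    (ℓ' = ℓ ∨ ∃ e ∈ t.dirs, PTree.step p e ∈ t.dom ∧ ℓf (PTree.step p e) = ℓ')

/-- All edges of the heap are local with respect to the given spanning tree. -/
noncomputable def AllLocal {Loc A : Type} (h : Heap Loc) (t : PTree A) (ℓf : Pos → Loc) : Prop :=
  ∀ ℓ k ℓ', HEdge h ℓ k ℓ' → LocalEdgeWrt t ℓf ℓ ℓ'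

/-! Every tree edge of `t'` is a heap edge, hence local w.r.t. `t`, and as it is not a loop it is
a tree edge of `t`. Both spanning trees have `|dom h| - 1` edges, so they cover exactly the same
set of unordered heap edges. Tree edges of `t` are therefore tree edges of `t'`, which makes
`t'⁻¹ ∘ t` a rotation, and an edge local w.r.t. `t` (a loop or a tree edge of `t`) is local
w.r.t. `t'`. -/

lemma Set.BijOn.of_comp_eqOn {α β γ : Type*} {f : α → γ} {f' : β → γ} {r : α → β}
    {s : Set α} {s' : Set β} {u : Set γ} (hf : Set.BijOn f s u) (hf' : Set.BijOn f' s' u)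
    (hr : Set.MapsTo r s s') (hcomp : Set.EqOn (f' ∘ r) f s) : Set.BijOn r s s' := by
  refine ⟨hr, fun a ha b hb hab => hf.injOn ha hb ?_, fun q hq => ?_⟩
  · rw [← hcomp ha, ← hcomp hb, Function.comp_apply, hab, Function.comp_apply]
  · obtain ⟨p, hp, hpq⟩ := hf.surjOn (hf'.mapsTo hq)
    exact ⟨p, hp, hf'.injOn (hr hp) hq ((hcomp hp).trans hpq)⟩

lemma Sym2.mk_mem_image_map_iff {α β : Type*} {f : α → β} {s : Set α} {E : Set (Sym2 α)}
    (hf : Set.InjOn f s) (hE : ∀ e ∈ E, ∀ x ∈ e, x ∈ s) {a b : α}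
    (ha : a ∈ s) (hb : b ∈ s) :
    s(f a, f b) ∈ Sym2.map f '' E ↔ s(a, b) ∈ E := by
  refine ⟨fun ⟨e, he, hfe⟩ => ?_, fun h => ⟨_, h, Sym2.map_mk f a b⟩⟩
  induction e using Sym2.ind with
  | h x y =>
    have hx := hE _ he x (Sym2.mem_mk_left x y)
    have hy := hE _ he y (Sym2.mem_mk_right x y)
    rw [Sym2.map_mk, Sym2.eq_iff] at hfe
    rcases hfe with ⟨hxa, hyb⟩ | ⟨hxb, hya⟩
    · rwa [← hf hx ha hxa, ← hf hy hb hyb]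
    · rwa [← hf hx hb hxb, ← hf hy ha hya, Sym2.eq_swap]

lemma Heap.mem_dom_of_hEdge {Loc : Type} {h : Heap Loc} {ℓ ℓ' : Loc} {k : ℕ}
    (hk : HEdge h ℓ k ℓ') : ℓ ∈ h.dom := by
  obtain ⟨ℓs, hℓs, -⟩ := hk
  simp [Heap.dom, hℓs]

namespace PTree

variable {A : Type} {t : PTree A}

lemma nil_mem_dom {p : Pos} (hp : p ∈ t.dom) : [] ∈ t.dom := by
  induction p using List.reverseRecOn with
  | nil => exact hp
  | append_singleton q i ih => exact ih (t.prefixClosed q i hp)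

lemma dropLast_mem_dom {p : Pos} (hp : p ∈ t.dom) : p.dropLast ∈ t.dom := by
  rcases p.eq_nil_or_concat' with rfl | ⟨q, i, rfl⟩
  · exact hp
  · simpa using (show q ∈ t.dom from t.prefixClosed q i hp)

lemma natCast_mem_dirs {p : Pos} {j : ℕ} (hc : p ++ [j] ∈ t.dom) : (j : ℤ) ∈ t.dirs := by
  have hbdd : BddAbove {i : ℕ | ∃ p, p ++ [i] ∈ t.dom} := by
    refine (t.fin.image fun l : Pos => l.getLastD 0).bddAbove.mono ?_
    rintro i ⟨p, hp⟩
    exact ⟨p ++ [i], hp, by simp⟩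
  exact Or.inr ⟨Int.natCast_nonneg j, by exact_mod_cast le_csSup hbdd ⟨p, hc⟩⟩

@[simp]
lemma step_natCast (p : Pos) (j : ℕ) : step p j = p ++ [j] := by
  simp [step, show (j : ℤ) ≠ -1 by omega]

@[simp]
lemma step_neg_one (p : Pos) : step p (-1) = p.dropLast := by
  simp [step]

def edgeSet (t : PTree A) : Set (Sym2 Pos) :=
  (fun c => s(c.dropLast, c)) '' (t.dom \ {[]})

lemma finite_edgeSet : t.edgeSet.Finite :=
  t.fin.sdiff.image _

lemma mk_mem_edgeSet {p : Pos} {i : ℕ} (h : p ++ [i] ∈ t.dom) : s(p, p ++ [i]) ∈ t.edgeSet :=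
  ⟨p ++ [i], ⟨h, by simp⟩, by simp⟩

lemma exists_of_mem_edgeSet {e : Sym2 Pos} (he : e ∈ t.edgeSet) :
    ∃ p i, p ++ [i] ∈ t.dom ∧ e = s(p, p ++ [i]) := by
  obtain ⟨c, ⟨hc, hne⟩, rfl⟩ := he
  have hne : c ≠ [] := hne
  refine ⟨c.dropLast, c.getLast hne, ?_, ?_⟩ <;> rw [List.dropLast_append_getLast hne]
  exact hc

lemma mem_dom_of_mem_edgeSet {e : Sym2 Pos} (he : e ∈ t.edgeSet) {x : Pos} (hx : x ∈ e) :
    x ∈ t.dom := by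
  obtain ⟨p, i, hpi, rfl⟩ := exists_of_mem_edgeSet he
  rcases Sym2.mem_iff.mp hx with rfl | rfl
  exacts [t.prefixClosed x i hpi, hpi]

lemma exists_step_of_mk_mem_edgeSet {a b : Pos} (h : s(a, b) ∈ t.edgeSet) :
    ∃ e ∈ t.dirs, b = step a e := by
  obtain ⟨p, i, hpi, hab⟩ := exists_of_mem_edgeSet h
  rcases Sym2.eq_iff.mp hab with ⟨rfl, rfl⟩ | ⟨rfl, rfl⟩
  · exact ⟨i, natCast_mem_dirs hpi, (step_natCast a i).symm⟩
  · exact ⟨-1, Or.inl rfl, by simp⟩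

lemma step_eq_or_mk_mem_edgeSet {p : Pos} (hp : p ∈ t.dom) {e : ℤ} (hs : step p e ∈ t.dom) :
    step p e = p ∨ s(p, step p e) ∈ t.edgeSet := by
  by_cases he : e = -1
  · subst he
    rcases p.eq_nil_or_concat' with rfl | ⟨q, i, rfl⟩
    · exact Or.inl rfl
    · simpa [Sym2.eq_swap] using mk_mem_edgeSet hp
  · have hstep : step p e = p ++ [e.toNat] := if_neg he
    rw [hstep] at hs ⊢
    exact Or.inr (mk_mem_edgeSet hs)

lemma ncard_image_edgeSet {Loc : Type} {ℓf : Pos → Loc} (hf : Set.InjOn ℓf t.dom) :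
    (Sym2.map ℓf '' t.edgeSet).ncard = t.dom.ncard - 1 := by
  have hinj : Set.InjOn (fun c => s(ℓf c.dropLast, ℓf c)) (t.dom \ {[]}) := by
    intro a ⟨ha, ha0⟩ b ⟨hb, hb0⟩ hab
    rcases Sym2.eq_iff.mp hab with ⟨-, h⟩ | ⟨h₁, h₂⟩
    · exact hf ha hb h
    · have h₁ := hf (dropLast_mem_dom ha) hb h₁
      have h₂ := hf ha (dropLast_mem_dom hb) h₂
      have l₁ := congrArg List.length h₁
      have l₂ := congrArg List.length h₂
      have := List.length_pos_iff.mpr (show a ≠ [] from ha0)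
      simp only [List.length_dropLast] at l₁ l₂
      omega
  rw [edgeSet, Set.image_image]
  simp only [Sym2.map_mk]
  rw [hinj.ncard_image]
  by_cases h0 : [] ∈ t.dom
  · exact Set.ncard_sdiff_singleton_of_mem h0
  · have : t.dom = ∅ := Set.eq_empty_of_forall_notMem fun p hp => h0 (nil_mem_dom hp)
    simp [this]

end PTree

section Spanning

variable {Loc A B : Type} {h : Heap Loc} {t : PTree A} {ℓf : Pos → Loc}

lemma localEdgeWrt_of_mk_mem_image_edgeSet {ℓ ℓ' : Loc}
    (hmem : s(ℓ, ℓ') ∈ Sym2.map ℓf '' t.edgeSet) : LocalEdgeWrt t ℓf ℓ ℓ' := by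
  have key : ∀ a b, s(a, b) ∈ t.edgeSet → LocalEdgeWrt t ℓf (ℓf a) (ℓf b) := by
    intro a b hab
    obtain ⟨e, he, rfl⟩ := PTree.exists_step_of_mk_mem_edgeSet hab
    exact ⟨a, PTree.mem_dom_of_mem_edgeSet hab (Sym2.mem_mk_left _ _), rfl,
      Or.inr ⟨e, he, PTree.mem_dom_of_mem_edgeSet hab (Sym2.mem_mk_right _ _), rfl⟩⟩
  obtain ⟨e, he, hmap⟩ := hmem
  induction e using Sym2.ind with
  | h a b =>
    rw [Sym2.map_mk, Sym2.eq_iff] at hmap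
    rcases hmap with ⟨rfl, rfl⟩ | ⟨rfl, rfl⟩
    · exact key a b he
    · exact key b a (Sym2.eq_swap ▸ he)

lemma LocalEdgeWrt.eq_or_mk_mem_image_edgeSet {ℓ ℓ' : Loc}
    (hloc : LocalEdgeWrt t ℓf ℓ ℓ') :
    ℓ' = ℓ ∨ s(ℓ, ℓ') ∈ Sym2.map ℓf '' t.edgeSet := by
  obtain ⟨p, hp, rfl, rfl | ⟨e, -, hs, rfl⟩⟩ := hloc
  · exact Or.inl rfl
  · rcases PTree.step_eq_or_mk_mem_edgeSet hp hs with hstep | hedge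
    · exact Or.inl (congrArg ℓf hstep)
    · exact Or.inr ⟨_, hedge, Sym2.map_mk _ _ _⟩

lemma IsSpanning.ncard_image_edgeSet (hst : IsSpanning h t ℓf) :
    (Sym2.map ℓf '' t.edgeSet).ncard = h.dom.ncard - 1 := by
  rw [PTree.ncard_image_edgeSet hst.1.injOn, hst.1.ncard_eq]

lemma IsSpanning.image_edgeSet_subset {t' : PTree B} {ℓf' : Pos → Loc}
    (hst' : IsSpanning h t' ℓf') (hloc : AllLocal h t ℓf) :
    Sym2.map ℓf' '' t'.edgeSet ⊆ Sym2.map ℓf '' t.edgeSet := by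
  rintro _ ⟨e, he, rfl⟩
  obtain ⟨c, i, hci, rfl⟩ := PTree.exists_of_mem_edgeSet he
  obtain ⟨k, hk⟩ := hst'.2 c (t'.prefixClosed c i hci) i hci
  rcases (hloc _ k _ hk).eq_or_mk_mem_image_edgeSet with hloop | hedge
  · simpa using hst'.1.injOn hci (t'.prefixClosed c i hci) hloop
  · exact hedge

lemma IsSpanning.image_edgeSet_eq {t' : PTree B} {ℓf' : Pos → Loc}
    (hst : IsSpanning h t ℓf) (hloc : AllLocal h t ℓf) (hst' : IsSpanning h t' ℓf') :
    Sym2.map ℓf' '' t'.edgeSet = Sym2.map ℓf '' t.edgeSet :=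
  Set.eq_of_subset_of_ncard_le (hst'.image_edgeSet_subset hloc)
    (by rw [hst.ncard_image_edgeSet, hst'.ncard_image_edgeSet])
    (PTree.finite_edgeSet.image _)

end Spanning

theorem spanning_tree_rotation_general {Loc A B : Type}
    (h : Heap Loc)
    (t : PTree A) (ℓf : Pos → Loc) (t' : PTree B) (ℓf' : Pos → Loc)
    (hst : IsSpanning h t ℓf) (hloc : AllLocal h t ℓf)
    (hst' : IsSpanning h t' ℓf')
    (r : Pos → Pos)
    (hr : ∀ p ∈ t.dom, r p ∈ t'.dom ∧ ℓf' (r p) = ℓf p) :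
    PTree.IsRotation t t' r ∧ AllLocal h t' ℓf' := by
  have hsame := hst.image_edgeSet_eq hloc hst'
  have hbij : Set.BijOn r t.dom t'.dom :=
    hst.1.of_comp_eqOn hst'.1 (fun p hp => (hr p hp).1) (fun p hp => (hr p hp).2)
  refine ⟨⟨hbij, fun p hp d hpd => ?_⟩, fun ℓ k ℓ' hk => ?_⟩
  · apply PTree.exists_step_of_mk_mem_edgeSet
    rw [← Sym2.mk_mem_image_map_iff hst'.1.injOn (fun _ => PTree.mem_dom_of_mem_edgeSet)
      (hr p hp).1 (hr _ hpd).1, (hr p hp).2, (hr _ hpd).2, hsame]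
    exact ⟨_, PTree.mk_mem_edgeSet hpd, Sym2.map_mk _ _ _⟩
  · rcases (hloc ℓ k ℓ' hk).eq_or_mk_mem_image_edgeSet with rfl | hedge
    · obtain ⟨q, hq, rfl⟩ := hst'.1.surjOn (Heap.mem_dom_of_hEdge hk)
      exact ⟨q, hq, rfl, Or.inl rfl⟩
    · exact localEdgeWrt_of_mk_mem_image_edgeSet (hsame ▸ hedge)

/-- If `t` is a spanning tree of the state `S = ⟨s,h⟩` all of whose
edges are local w.r.t. `t`, then for every spanning tree `t'` of `S`,
`t ∼_{t'⁻¹ ∘ t} t'` and all edges of `S` are local w.r.t. `t'` as well. -/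
theorem spanning_tree_rotation {Var Loc A B : Type}
    (s : Var → Option Loc) (h : Heap Loc)
    (t : PTree A) (ℓf : Pos → Loc) (t' : PTree B) (ℓf' : Pos → Loc)
    (hst : IsSpanning h t ℓf) (hloc : AllLocal h t ℓf)
    (hst' : IsSpanning h t' ℓf')
    (r : Pos → Pos)
    (hr : ∀ p ∈ t.dom, r p ∈ t'.dom ∧ ℓf' (r p) = ℓf p) :
    PTree.IsRotation t t' r ∧ AllLocal h t' ℓf' :=
  spanning_tree_rotation_general h t ℓf t' ℓf' hst hloc hst' r hr
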